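/- Let t ≥ 2 and m ≥ 2 be integers, and let λ be a (t, mt−1)-core partition with distinct parts whose size is maximal among all (t, mt−1)-core partitions with distinct parts. Then n_{t−1}(λ) = 0 or n_{t−1}(λ) = m−1, and for every 1 ≤ i ≤ t−2, n_i(λ) = 0 or n_i(λ) = m. -/

import Mathlib

/-- A partition: a finite weakly decreasing list of positive integers. -/
structure Partn where
  parts : List ℕ
  pos : ∀ p ∈ parts, 0 < p
  sorted : parts.Pairwise (· ≥ ·)

namespace Partn

/-- The size of a partition: the sum of its parts. -/
def size (l : Partn) : ℕ := l.parts.sum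

/-- The number of rows `k` (0-indexed) with `λ_k ≥ j` (the length of column `j`). -/
def colLen (l : Partn) (j : ℕ) : ℕ := (l.parts.filter (fun p => j ≤ p)).length

/-- The hook length of the box in row `i` (0-indexed) and column `j` (1-indexed):
`λ_i − j + #{k : λ_k ≥ j} − i + 1` (with 1-indexed rows). -/
def hook (l : Partn) (i j : ℕ) : ℕ :=
  (l.parts.getD i 0 - j) + (l.colLen j - (i + 1)) + 1

/-- A partition is a `t`-core if none of its hook lengths is divisible by `t`. -/
def IsCore (t : ℕ) (l : Partn) : Prop :=
  ∀ i j : ℕ, i < l.parts.length → 1 ≤ j → j ≤ l.parts.getD i 0 → ¬ (t ∣ l.hook i j)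

/-- A partition has distinct parts if its parts are strictly decreasing. -/
def DistinctParts (l : Partn) : Prop := l.parts.Pairwise (· > ·)

/-- The β-set of a partition: `{λ_i + ℓ − i : 1 ≤ i ≤ ℓ}` (1-indexed). -/
def betaSet (l : Partn) : Finset ℕ :=
  (Finset.range l.parts.length).image
    (fun i => l.parts.getD i 0 + (l.parts.length - 1 - i))

/-- `nFn t i l` is the number of elements of the β-set of `l` congruent to `i` mod `t`. -/
def nFn (t i : ℕ) (l : Partn) : ℕ :=
  (l.betaSet.filter (fun x => x % t = i)).card

end Partn

/-! The β-set `{λᵢ + ℓ - i}` determines a partition, and a hook of length `h` is a β-number `x`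
with `x - h` missing from the β-set; so `λ` is a `d`-core iff its β-set is closed under
subtracting `d`, and distinct parts forbid two consecutive β-numbers. The β-set of a `t`-core is a
`t`-abacus with `nᵢ` beads pushed to the top of runner `i`. Being also an `(mt - 1)`-core with
distinct parts then says: runner `0` is empty, runner `i` holds at most `m` beads (`m - 1` for
`i = t - 1`), and no two adjacent runners are both occupied; conversely every such configuration
is the β-set of such a partition. Twice the size, `2 ∑ β - ℓ (ℓ - 1)`, is a quadratic in each `nᵢ`
with leading coefficient `t - 1 > 0`, so if some `nᵢ` lay strictly between `0` and its maximum,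
emptying or filling runner `i` would give a larger partition. -/

open Finset

def ClosedUnderSub (d : ℕ) (S : Finset ℕ) : Prop := ∀ x ∈ S, d ≤ x → x - d ∈ S

lemma ClosedUnderSub.sub_mul_mem {d : ℕ} {S : Finset ℕ} (h : ClosedUnderSub d S) {x : ℕ}
    (hx : x ∈ S) : ∀ q, q * d ≤ x → x - q * d ∈ S
  | 0, _ => by simpa using hx
  | q + 1, hq => by
    have := h _ (h.sub_mul_mem hx q (by nlinarith)) (by rw [add_mul] at hq; omega)
    rwa [Nat.sub_sub, ← Nat.succ_mul] at this

lemma eq_range_card_of_isLowerSet {D : Finset ℕ} (hD : IsLowerSet (D : Set ℕ)) :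
    D = range #D := by
  refine eq_of_subset_of_card_le (fun a ha => mem_range.2 ?_) (card_range _).le
  calc a < #(range (a + 1)) := by simp
    _ ≤ #D := card_le_card fun b hb => hD (mem_range_succ_iff.1 hb) ha

lemma add_mul_mod_div {t r a : ℕ} (hr : r < t) : (r + t * a) % t = r ∧ (r + t * a) / t = a :=
  ⟨by simp [Nat.mod_eq_of_lt hr], by rw [Nat.add_mul_div_left _ _ (by omega),
    Nat.div_eq_of_lt hr, zero_add]⟩

/-- In a set closed under subtracting `t`, each residue class mod `t` is an initial segment of
that class. -/
lemma ClosedUnderSub.mem_iff {t : ℕ} (ht : 0 < t) {S : Finset ℕ} (h : ClosedUnderSub t S)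
    (x : ℕ) : x ∈ S ↔ x / t < #{y ∈ S | y % t = x % t} := by
  set r := x % t
  set F := {y ∈ S | y % t = r}
  have hr : r < t := Nat.mod_lt x ht
  have hmem : ∀ a, a ∈ F.image (· / t) ↔ r + t * a ∈ S := fun a => by
    constructor
    · rw [Finset.mem_image]
      rintro ⟨y, hy, rfl⟩
      rw [mem_filter] at hy
      rw [← hy.2, Nat.mod_add_div]
      exact hy.1
    · intro ha
      exact mem_image.2 ⟨_, mem_filter.2 ⟨ha, (add_mul_mod_div hr).1⟩, (add_mul_mod_div hr).2⟩
  have hlower : IsLowerSet (F.image (· / t) : Set ℕ) := by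
    intro a b hba ha
    simp only [mem_coe, hmem] at ha ⊢
    obtain ⟨k, rfl⟩ := Nat.exists_eq_add_of_le hba
    have := h.sub_mul_mem ha k (by nlinarith)
    rwa [show r + t * (b + k) = r + t * b + k * t by ring, Nat.add_sub_cancel] at this
  have hcard : #(F.image (· / t)) = #F := card_image_of_injOn fun y hy z hz hyz => by
    rw [← Nat.mod_add_div y t, ← Nat.mod_add_div z t, (mem_filter.1 hy).2, (mem_filter.1 hz).2,
      show y / t = z / t from hyz]
  rw [← hcard, ← mem_range, ← eq_range_card_of_isLowerSet hlower, hmem, Nat.mod_add_div]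

lemma List.lt_length_filter_le_iff {L : List ℕ} (hL : L.Pairwise (· ≥ ·)) {j : ℕ} (hj : 0 < j)
    (k : ℕ) : k < (L.filter fun p => j ≤ p).length ↔ j ≤ L.getD k 0 := by
  induction L generalizing k with
  | nil => simp; omega
  | cons a tl ih =>
    rw [List.pairwise_cons] at hL
    by_cases ha : j ≤ a
    · rcases k with _ | k
      · simp [ha]
      · simp [ha, ih hL.2]
    · have htl : ∀ k, tl.getD k 0 ≤ a := fun k => by
        rcases lt_or_ge k tl.length with hk | hk
        · rw [List.getD_eq_getElem _ _ hk]; exact hL.1 _ (List.getElem_mem hk)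
        · rw [List.getD_eq_default _ _ hk]; exact Nat.zero_le a
      rw [List.filter_cons_of_neg (by simpa using ha), List.filter_eq_nil_iff.2 fun p hp => by
        simpa using lt_of_le_of_lt (hL.1 p hp) (not_le.1 ha)]
      rcases k with _ | k
      · simpa using ha
      · simpa using fun h : j ≤ tl.getD k 0 => ha (h.trans (htl k))

lemma List.sum_eq_sum_range_getD {M : Type*} [AddCommMonoid M] (L : List M) :
    L.sum = ∑ i ∈ Finset.range L.length, L.getD i 0 := by
  induction L with
  | nil => simp
  | cons a tl ih =>
    rw [List.length_cons, Finset.sum_range_succ', List.sum_cons, ih, add_comm]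
    simp only [List.getD_cons_succ, List.getD_cons_zero]

lemma two_mul_sum_range_natCast {R : Type*} [CommRing R] (n : ℕ) :
    2 * ∑ i ∈ range n, (i : R) = n * (n - 1) := by
  induction n with
  | zero => simp
  | succ n ih => rw [sum_range_succ, mul_add, ih]; push_cast; ring

lemma add_mul_sub_le_of_forall_succ {f : ℕ → ℕ} {c d : ℕ}
    (hf : ∀ k, k + 1 < c → f (k + 1) + d ≤ f k) {i j : ℕ} (hij : i ≤ j) (hj : j < c) :
    f j + d * (j - i) ≤ f i := by
  induction j, hij using Nat.le_induction with
  | base => simp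
  | succ j hij ih =>
    have := hf j hj
    have := ih (by omega)
    rw [Nat.sub_add_comm hij, mul_add_one]
    omega

section DescElem

variable (S : Finset ℕ)

def descElem (k : ℕ) : ℕ := (S.sort (· ≥ ·)).getD k 0

variable {S}

lemma descElem_mem {k : ℕ} (hk : k < #S) : descElem S k ∈ S := by
  rw [descElem, List.getD_eq_getElem _ _ (by simpa using hk), ← mem_sort (· ≥ ·)]
  exact List.getElem_mem _

lemma exists_descElem_eq {x : ℕ} (hx : x ∈ S) : ∃ k < #S, descElem S k = x := by
  obtain ⟨k, hk, rfl⟩ := List.getElem_of_mem ((mem_sort (· ≥ ·)).2 hx)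
  exact ⟨k, by simpa using hk, List.getD_eq_getElem _ _ hk⟩

lemma descElem_succ_lt {k : ℕ} (hk : k + 1 < #S) : descElem S (k + 1) < descElem S k := by
  have hk' : k + 1 < (S.sort (· ≥ ·)).length := by simpa using hk
  rw [descElem, descElem, List.getD_eq_getElem _ _ hk', List.getD_eq_getElem _ _ (by omega)]
  exact (sortedGT_sort S).strictAnti_get (Fin.mk_lt_mk.2 (Nat.lt_succ_self k))

lemma sub_le_descElem (h0 : 0 ∉ S) {k : ℕ} (hk : k < #S) : #S - k ≤ descElem S k := by
  have := add_mul_sub_le_of_forall_succ (f := descElem S) (d := 1)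
    (fun k hk => descElem_succ_lt hk) (Nat.le_sub_one_of_lt hk) (by omega)
  have : descElem S (#S - 1) ≠ 0 := fun h => h0 (h ▸ descElem_mem (by omega))
  omega

end DescElem

namespace Partn

variable (l : Partn)

def beta (i : ℕ) : ℕ := l.parts.getD i 0 + (l.parts.length - 1 - i)

/-- The missing β-number paired with column `j ≥ 1`: the hook length of box `(i, j)` is
`beta i - gap j`. -/
def gap (j : ℕ) : ℕ := l.parts.length + j - 1 - l.colLen j

variable {l}

lemma getD_antitone {i j : ℕ} (hij : i ≤ j) : l.parts.getD j 0 ≤ l.parts.getD i 0 := by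
  rcases lt_or_ge j l.parts.length with hj | hj
  · rcases hij.lt_or_eq with h | rfl
    · rw [List.getD_eq_getElem _ _ hj, List.getD_eq_getElem _ _ (h.trans hj)]
      exact List.pairwise_iff_getElem.1 l.sorted i j (h.trans hj) hj h
    · rfl
  · rw [List.getD_eq_default _ _ hj]; exact Nat.zero_le _

lemma one_le_getD {i : ℕ} (hi : i < l.parts.length) : 1 ≤ l.parts.getD i 0 := by
  rw [List.getD_eq_getElem _ _ hi]; exact l.pos _ (List.getElem_mem hi)

lemma lt_colLen_iff {j : ℕ} (hj : 0 < j) (k : ℕ) : k < l.colLen j ↔ j ≤ l.parts.getD k 0 :=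
  List.lt_length_filter_le_iff l.sorted hj k

lemma colLen_le_length {j : ℕ} (hj : 0 < j) : l.colLen j ≤ l.parts.length := by
  by_contra! h
  have := (lt_colLen_iff hj _).1 h
  rw [List.getD_eq_default _ _ le_rfl] at this
  omega

lemma colLen_antitoneOn : AntitoneOn l.colLen (Set.Ioi 0) := by
  intro j hj j' hj' hjj'
  by_contra! h
  exact lt_irrefl _ ((lt_colLen_iff hj _).2 (hjj'.trans ((lt_colLen_iff hj' _).1 h)))

lemma beta_strictAntiOn : StrictAntiOn l.beta (Set.Iio l.parts.length) := by
  intro i _ j hj hij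
  have := getD_antitone (l := l) hij.le
  simp only [beta, Set.mem_Iio] at hj ⊢
  omega

lemma betaSet_eq_image_beta : l.betaSet = (range l.parts.length).image l.beta := rfl

lemma mem_betaSet {x : ℕ} : x ∈ l.betaSet ↔ ∃ i < l.parts.length, l.beta i = x := by
  simp [betaSet_eq_image_beta]

lemma card_betaSet : #l.betaSet = l.parts.length := by
  rw [betaSet_eq_image_beta, card_image_of_injOn, card_range]
  exact beta_strictAntiOn.injOn.mono fun i hi => by simpa using hi

lemma zero_not_mem_betaSet : 0 ∉ l.betaSet := by
  rw [mem_betaSet]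
  rintro ⟨i, hi, h⟩
  have := one_le_getD hi
  simp only [beta] at h
  omega

lemma hook_add_gap {i j : ℕ} (hi : i < l.parts.length) (hj : 0 < j)
    (hji : j ≤ l.parts.getD i 0) : l.hook i j + l.gap j = l.beta i := by
  have := (lt_colLen_iff hj i).2 hji
  have := colLen_le_length (l := l) hj
  simp only [hook, gap, beta]
  omega

lemma gap_not_mem_betaSet {j : ℕ} (hj : 0 < j) : l.gap j ∉ l.betaSet := by
  rw [mem_betaSet]
  rintro ⟨k, hk, h⟩
  have := colLen_le_length (l := l) hj
  have := lt_colLen_iff (l := l) hj k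
  simp only [beta, gap] at h
  by_cases hjk : j ≤ l.parts.getD k 0 <;> omega

lemma gap_strictMonoOn : StrictMonoOn l.gap (Set.Ioi 0) := by
  intro j hj j' hj' hjj'
  have := colLen_antitoneOn (l := l) hj hj' hjj'.le
  have := colLen_le_length (l := l) hj
  simp only [gap, Set.mem_Ioi] at hj ⊢
  omega

lemma card_range_beta_inter_betaSet {i : ℕ} (hi : i < l.parts.length) :
    #(range (l.beta i) ∩ l.betaSet) = l.parts.length - 1 - i := by
  have : range (l.beta i) ∩ l.betaSet = (Ioo i l.parts.length).image l.beta := by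
    ext x
    simp only [mem_inter, mem_range, mem_betaSet, Finset.mem_image, mem_Ioo]
    constructor
    · rintro ⟨hx, k, hk, rfl⟩
      exact ⟨k, ⟨(beta_strictAntiOn.lt_iff_gt hk hi).1 hx, hk⟩, rfl⟩
    · rintro ⟨k, ⟨hik, hk⟩, rfl⟩
      exact ⟨beta_strictAntiOn hi hk hik, k, hk, rfl⟩
  rw [this, card_image_of_injOn (beta_strictAntiOn.injOn.mono fun k hk => by
    simpa using (mem_Ioo.1 hk).2), Nat.card_Ioo]
  omega

lemma image_gap {i : ℕ} (hi : i < l.parts.length) :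
    (Icc 1 (l.parts.getD i 0)).image l.gap = range (l.beta i) \ l.betaSet := by
  refine eq_of_subset_of_card_le (fun x hx => ?_) ?_
  · obtain ⟨j, hj, rfl⟩ := Finset.mem_image.1 hx
    rw [mem_Icc] at hj
    have := hook_add_gap hi hj.1 hj.2
    have : 0 < l.hook i j := Nat.succ_pos _
    exact mem_sdiff.2 ⟨mem_range.2 (by omega), gap_not_mem_betaSet hj.1⟩
  · have := card_sdiff_add_card_inter (range (l.beta i)) l.betaSet
    rw [card_range, card_range_beta_inter_betaSet hi] at this
    rw [card_image_of_injOn (gap_strictMonoOn.injOn.mono fun j hj => (mem_Icc.1 (mem_coe.1 hj)).1),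
      Nat.card_Icc]
    simp only [beta] at this ⊢
    omega

/-- A hook of length `h` in row `i` is the same as a gap `β i - h` below the β-number `β i`. -/
theorem isCore_iff (d : ℕ) : l.IsCore d ↔ ClosedUnderSub d l.betaSet := by
  constructor
  · intro hcore x hx hdx
    obtain ⟨i, hi, rfl⟩ := mem_betaSet.1 hx
    rcases Nat.eq_zero_or_pos d with rfl | hd
    · simpa using hx
    by_contra hgap
    have : l.beta i - d ∈ (Icc 1 (l.parts.getD i 0)).image l.gap := by
      rw [image_gap hi]; exact mem_sdiff.2 ⟨mem_range.2 (by omega), hgap⟩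
    obtain ⟨j, hj, hgapj⟩ := Finset.mem_image.1 this
    rw [mem_Icc] at hj
    have := hook_add_gap hi hj.1 hj.2
    exact hcore i j hi hj.1 hj.2 ⟨1, by omega⟩
  · rintro hclosed i j hi hj hji ⟨q, hq⟩
    have hsum := hook_add_gap hi hj hji
    have hpos : 0 < l.hook i j := Nat.succ_pos _
    have := hclosed.sub_mul_mem (mem_betaSet.2 ⟨i, hi, rfl⟩) q (by rw [mul_comm]; omega)
    rw [mul_comm, ← hq, ← hsum, Nat.add_sub_cancel_left] at this
    exact gap_not_mem_betaSet hj this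

lemma getD_lt_getD (hd : l.DistinctParts) {i j : ℕ} (hij : i < j) (hj : j < l.parts.length) :
    l.parts.getD j 0 < l.parts.getD i 0 := by
  rw [List.getD_eq_getElem _ _ hj, List.getD_eq_getElem _ _ (hij.trans hj)]
  exact List.pairwise_iff_getElem.1 hd i j (hij.trans hj) hj hij

lemma add_one_not_mem_betaSet (hd : l.DistinctParts) {x : ℕ} (hx : x ∈ l.betaSet) :
    x + 1 ∉ l.betaSet := by
  obtain ⟨k', hk', rfl⟩ := mem_betaSet.1 hx
  intro hx'
  obtain ⟨k, hk, hkk'⟩ := mem_betaSet.1 hx'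
  have hlt : k < k' := (beta_strictAntiOn.lt_iff_gt hk' hk).1 (by omega)
  have := getD_lt_getD hd (Nat.lt_succ_self k) (by omega)
  have := getD_antitone (l := l) (Nat.succ_le_of_lt hlt)
  simp only [beta] at hkk'
  omega

lemma two_mul_sum_betaSet (l : Partn) :
    2 * ∑ x ∈ l.betaSet, (x : ℤ) = 2 * l.size + l.parts.length * (l.parts.length - 1) := by
  rw [betaSet_eq_image_beta, sum_image (beta_strictAntiOn.injOn.mono fun i hi => by simpa using hi)]
  simp only [beta, Nat.cast_add, sum_add_distrib, size, List.sum_eq_sum_range_getD, Nat.cast_sum]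
  rw [sum_range_reflect (Nat.cast : ℕ → ℤ), mul_add, two_mul_sum_range_natCast]

section OfBeta

variable {S : Finset ℕ}

variable (S) in
def ofBeta (h0 : 0 ∉ S) : Partn where
  parts := List.ofFn fun k : Fin #S => descElem S k - (#S - 1 - k)
  pos := by
    simp only [List.mem_ofFn, forall_exists_index]
    rintro _ k rfl
    have := sub_le_descElem h0 k.2
    omega
  sorted := by
    rw [List.pairwise_ofFn]
    intro i j hij
    have := add_mul_sub_le_of_forall_succ (f := descElem S) (d := 1)
      (fun k hk => descElem_succ_lt hk) hij.le j.2
    omega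

variable (h0 : 0 ∉ S)

lemma length_ofBeta : (ofBeta S h0).parts.length = #S := List.length_ofFn

lemma beta_ofBeta {k : ℕ} (hk : k < #S) : (ofBeta S h0).beta k = descElem S k := by
  have := sub_le_descElem h0 hk
  rw [Partn.beta, length_ofBeta, List.getD_eq_getElem _ _ (by rwa [length_ofBeta])]
  simp only [ofBeta, List.getElem_ofFn]
  omega

lemma betaSet_ofBeta : (ofBeta S h0).betaSet = S := by
  ext x
  rw [Partn.mem_betaSet, length_ofBeta]
  constructor
  · rintro ⟨k, hk, rfl⟩
    rw [beta_ofBeta h0 hk]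
    exact descElem_mem hk
  · intro hx
    obtain ⟨k, hk, rfl⟩ := exists_descElem_eq hx
    exact ⟨k, hk, beta_ofBeta h0 hk⟩

lemma distinctParts_ofBeta (hS : ∀ x ∈ S, x + 1 ∉ S) : (ofBeta S h0).DistinctParts := by
  have hstep : ∀ k, k + 1 < #S → descElem S (k + 1) + 2 ≤ descElem S k := fun k hk => by
    have := descElem_succ_lt hk
    have : descElem S (k + 1) + 1 ≠ descElem S k := fun h => hS _ (descElem_mem hk)
      (h ▸ descElem_mem (by omega))
    omega
  rw [Partn.DistinctParts, ofBeta, List.pairwise_ofFn]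
  intro i j hij
  have := add_mul_sub_le_of_forall_succ hstep hij.le j.2
  have := sub_le_descElem h0 j.2
  omega

end OfBeta

end Partn

section Abacus

/-- The `t`-abacus with `ν i` beads pushed to the top of runner `i`, as a set of β-numbers. -/
def abacus (t : ℕ) (ν : ℕ → ℕ) : Finset ℕ :=
  ((range t).sigma fun i => range (ν i)).image fun p => p.1 + t * p.2

variable {t : ℕ} {ν : ℕ → ℕ}

lemma exists_add_mul_eq (ht : 0 < t) (x : ℕ) : ∃ r < t, ∃ q, r + t * q = x :=
  ⟨x % t, Nat.mod_lt x ht, x / t, Nat.mod_add_div x t⟩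

lemma mem_abacus (ht : 0 < t) {x : ℕ} : x ∈ abacus t ν ↔ x / t < ν (x % t) := by
  simp only [abacus, Finset.mem_image, mem_sigma, mem_range, Sigma.exists]
  constructor
  · rintro ⟨i, a, ⟨hi, ha⟩, rfl⟩
    rwa [(add_mul_mod_div hi).1, (add_mul_mod_div hi).2]
  · exact fun hx => ⟨x % t, x / t, ⟨Nat.mod_lt x ht, hx⟩, Nat.mod_add_div x t⟩

lemma add_mul_mem_abacus (ht : 0 < t) {i a : ℕ} (hi : i < t) :
    i + t * a ∈ abacus t ν ↔ a < ν i := by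
  rw [mem_abacus ht, (add_mul_mod_div hi).1, (add_mul_mod_div hi).2]

lemma injOn_abacus :
    Set.InjOn (fun p : Σ _ : ℕ, ℕ => p.1 + t * p.2) ((range t).sigma fun i => range (ν i)) := by
  rintro ⟨i, a⟩ hia ⟨j, b⟩ hjb h
  simp only [coe_sigma, Set.mem_sigma_iff, coe_range, Set.mem_Iio] at hia hjb h
  have := add_mul_mod_div (a := a) hia.1
  have := add_mul_mod_div (a := b) hjb.1
  obtain rfl : i = j := by simp_all
  obtain rfl : a = b := by simp_all
  rfl

lemma card_abacus : #(abacus t ν) = ∑ i ∈ range t, ν i := by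
  rw [abacus, card_image_of_injOn injOn_abacus, card_sigma]
  simp

lemma two_mul_sum_abacus :
    2 * ∑ x ∈ abacus t ν, (x : ℤ) = ∑ i ∈ range t, (2 * ν i * i + t * ν i * (ν i - 1) : ℤ) := by
  rw [abacus, sum_image injOn_abacus, sum_sigma, mul_sum]
  refine sum_congr rfl fun i _ => ?_
  push_cast
  rw [sum_add_distrib, ← mul_sum, sum_const, card_range, nsmul_eq_mul, mul_add,
    mul_left_comm 2 (t : ℤ), two_mul_sum_range_natCast]
  ring

lemma closedUnderSub_abacus (ht : 0 < t) : ClosedUnderSub t (abacus t ν) := by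
  intro x hx htx
  obtain ⟨y, rfl⟩ := Nat.exists_eq_add_of_le' htx
  rw [mem_abacus ht, Nat.add_mod_right, Nat.add_div_right _ ht] at hx
  rw [Nat.add_sub_cancel, mem_abacus ht]
  omega

lemma Partn.betaSet_eq_abacus {l : Partn} (ht : 0 < t) (hl : l.IsCore t) :
    l.betaSet = abacus t fun i => l.nFn t i := by
  ext x
  rw [mem_abacus ht, ((Partn.isCore_iff t).1 hl).mem_iff ht x, Partn.nFn]

end Abacus

/-- Twice the size of a partition with β-set `abacus t ν`: `2 |λ| = 2 ∑ β - ℓ (ℓ - 1)`, with the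
sum of the β-numbers taken runner by runner. -/
def twiceSize (t : ℕ) (ν : ℕ → ℕ) : ℤ :=
  ∑ i ∈ range t, (2 * ν i * i + t * ν i * (ν i - 1) : ℤ) -
    (∑ i ∈ range t, (ν i : ℤ)) * (∑ i ∈ range t, (ν i : ℤ) - 1)

lemma Partn.two_mul_size {l : Partn} {t : ℕ} {ν : ℕ → ℕ}
    (hl : l.betaSet = abacus t ν) : 2 * (l.size : ℤ) = twiceSize t ν := by
  have hsum := l.two_mul_sum_betaSet
  rw [hl, two_mul_sum_abacus, ← l.card_betaSet, hl, card_abacus] at hsum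
  push_cast at hsum
  rw [twiceSize, hsum]
  ring

open Function in
lemma sum_apply_update {ι α M : Type*} [DecidableEq ι] [AddCommMonoid M] {s : Finset ι} {i : ι}
    (hi : i ∈ s) (ν : ι → α) (c : α) (g : ι → α → M) :
    ∑ j ∈ s, g j (update ν i c j) = g i c + ∑ j ∈ s.erase i, g j (ν j) := by
  rw [← add_sum_erase _ _ hi, update_self]
  congr 1
  exact sum_congr rfl fun j hj => by rw [update_of_ne (ne_of_mem_erase hj)]

open Function in
/-- With the other runners fixed, `twiceSize` is a quadratic in the number of beads on runner `i`
with leading coefficient `t - 1`, hence strictly convex. -/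
lemma twiceSize_lt_update {t : ℕ} (ht : 2 ≤ t) {ν : ℕ → ℕ} {i N : ℕ} (hi : i < t)
    (h0 : 0 < ν i) (hN : ν i < N) :
    twiceSize t ν < twiceSize t (update ν i 0) ∨ twiceSize t ν < twiceSize t (update ν i N) := by
  have hit : i ∈ range t := mem_range.2 hi
  set A := ∑ j ∈ (range t).erase i, (2 * ν j * j + t * ν j * (ν j - 1) : ℤ)
  set L := ∑ j ∈ (range t).erase i, (ν j : ℤ)
  set f : ℤ → ℤ := fun c => 2 * c * i + t * c * (c - 1) + A - (c + L) * (c + L - 1)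
  have hupdate : ∀ c : ℕ, twiceSize t (update ν i c) = f c := fun c => by
    rw [twiceSize, sum_apply_update hit ν c fun j b => (2 * b * j + t * b * (b - 1) : ℤ),
      sum_apply_update hit ν c fun _ b => (b : ℤ)]
  have hself : twiceSize t ν = f (ν i) := by rw [← hupdate, update_eq_self]
  have hconvex : (N - ν i) * f 0 + ν i * f N - N * f (ν i) = (t - 1) * N * ν i * (N - ν i) := by
    simp only [f]; ring
  rw [hself, hupdate, hupdate, Nat.cast_zero]
  by_contra! h
  have : (1 : ℤ) < t := by exact_mod_cast ht
  have : (ν i : ℤ) < N := by exact_mod_cast hN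
  have : (0 : ℤ) < ν i := by exact_mod_cast h0
  have : (0 : ℤ) < (t - 1) * N * ν i * (N - ν i) := by
    apply mul_pos (mul_pos (mul_pos _ _) _) <;> omega
  linarith [mul_le_mul_of_nonneg_left h.1 (show (0 : ℤ) ≤ N - ν i by omega),
    mul_le_mul_of_nonneg_left h.2 (show (0 : ℤ) ≤ ν i by omega)]

/-- The number of beads that fit on runner `i` of the `t`-abacus below `mt - 1`. -/
def beadCap (t m i : ℕ) : ℕ := if i = t - 1 then m - 1 else m

/-- Bead counts `ν` whose abacus is the β-set of a `(t, mt - 1)`-core with distinct parts. -/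
structure IsAdmissible (t m : ℕ) (ν : ℕ → ℕ) : Prop where
  zero : ν 0 = 0
  le_beadCap : ∀ i < t, ν i ≤ beadCap t m i
  adjacent : ∀ i, i + 1 < t → ν i = 0 ∨ ν (i + 1) = 0

namespace IsAdmissible

variable {t m : ℕ} {ν : ℕ → ℕ}

lemma lt_of_mem_abacus (h : IsAdmissible t m ν) (ht : 0 < t) {x : ℕ} (hx : x ∈ abacus t ν) :
    x < m * t - 1 := by
  obtain ⟨r, hr, q, rfl⟩ := exists_add_mul_eq ht x
  rw [add_mul_mem_abacus ht hr] at hx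
  have hcap := h.le_beadCap r hr
  rw [mul_comm m]
  by_cases hrt : r = t - 1
  · rw [beadCap, if_pos hrt] at hcap
    have := Nat.mul_le_mul_left t (show q + 2 ≤ m by omega)
    rw [mul_add] at this
    omega
  · rw [beadCap, if_neg hrt] at hcap
    have := Nat.mul_le_mul_left t (show q + 1 ≤ m by omega)
    rw [mul_add] at this
    omega

lemma add_one_not_mem_abacus (h : IsAdmissible t m ν) (ht : 0 < t) {x : ℕ}
    (hx : x ∈ abacus t ν) : x + 1 ∉ abacus t ν := by
  obtain ⟨r, hr, q, rfl⟩ := exists_add_mul_eq ht x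
  rw [add_mul_mem_abacus ht hr] at hx
  rcases (show r + 1 ≤ t from hr).lt_or_eq with hr' | hr'
  · rw [add_right_comm, add_mul_mem_abacus ht hr']
    have := h.adjacent _ hr'
    omega
  · rw [add_right_comm, hr', show t + t * q = 0 + t * (q + 1) by ring, add_mul_mem_abacus ht ht,
      h.zero]
    omega

lemma exists_partn (h : IsAdmissible t m ν) (ht : 0 < t) :
    ∃ μ : Partn, (μ.IsCore t ∧ μ.IsCore (m * t - 1) ∧ μ.DistinctParts) ∧
      2 * (μ.size : ℤ) = twiceSize t ν := by
  have h0 : 0 ∉ abacus t ν := by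
    simpa [h.zero] using (add_mul_mem_abacus (ν := ν) ht ht (a := 0)).not
  refine ⟨Partn.ofBeta _ h0, ⟨?_, ?_, ?_⟩, Partn.two_mul_size (Partn.betaSet_ofBeta h0)⟩
  · rw [Partn.isCore_iff, Partn.betaSet_ofBeta]
    exact closedUnderSub_abacus ht
  · rw [Partn.isCore_iff, Partn.betaSet_ofBeta]
    exact fun x hx hle => absurd (h.lt_of_mem_abacus ht hx) (not_lt.2 hle)
  · exact Partn.distinctParts_ofBeta h0 fun x hx => h.add_one_not_mem_abacus ht hx

lemma update_zero (h : IsAdmissible t m ν) (i : ℕ) : IsAdmissible t m (Function.update ν i 0) where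
  zero := by rw [Function.update_apply]; split_ifs <;> simp [h.zero]
  le_beadCap j hj := by
    rw [Function.update_apply]; split_ifs
    · exact Nat.zero_le _
    · exact h.le_beadCap j hj
  adjacent j hj := by
    have := h.adjacent j hj
    simp only [Function.update_apply]
    split_ifs <;> omega

lemma update_beadCap (h : IsAdmissible t m ν) {i : ℕ} (hi : i ≠ 0) (hν : ν i ≠ 0) :
    IsAdmissible t m (Function.update ν i (beadCap t m i)) where
  zero := by rw [Function.update_of_ne (Ne.symm hi), h.zero]
  le_beadCap j hj := by
    rw [Function.update_apply]; split_ifs with hji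
    · rw [hji]
    · exact h.le_beadCap j hj
  adjacent j hj := by
    have := h.adjacent j hj
    simp only [Function.update_apply]
    split_ifs <;> subst_vars <;> omega

lemma exists_twiceSize_gt (h : IsAdmissible t m ν) (ht : 2 ≤ t) {i : ℕ} (hi : i ≠ 0) (hit : i < t)
    (hν : ν i ≠ 0) (hcap : ν i ≠ beadCap t m i) :
    ∃ ν', IsAdmissible t m ν' ∧ twiceSize t ν < twiceSize t ν' := by
  rcases twiceSize_lt_update ht hit (Nat.pos_of_ne_zero hν)
    (lt_of_le_of_ne (h.le_beadCap i hit) hcap) with hlt | hlt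
  · exact ⟨_, h.update_zero i, hlt⟩
  · exact ⟨_, h.update_beadCap hi hν, hlt⟩

end IsAdmissible

lemma Partn.isAdmissible_nFn {t m : ℕ} (ht : 0 < t) (hm : 0 < m) {l : Partn}
    (hl : l.IsCore t ∧ l.IsCore (m * t - 1) ∧ l.DistinctParts) :
    IsAdmissible t m fun i => l.nFn t i := by
  obtain ⟨hcore, hcore', hd⟩ := hl
  have hB := l.betaSet_eq_abacus ht hcore
  have hmem : ∀ {i a}, i < t → a < l.nFn t i → i + t * a ∈ l.betaSet := fun hi ha => by
    rw [hB, add_mul_mem_abacus ht hi]; exact ha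
  have hclosed := (Partn.isCore_iff _).1 hcore'
  refine ⟨?_, fun i hi => ?_, fun i hi => ?_⟩
  · by_contra h0
    exact Partn.zero_not_mem_betaSet (hmem (i := 0) (a := 0) ht (by omega))
  · by_contra! hcap
    have htm : t ≤ m * t := Nat.le_mul_of_pos_left t hm
    rw [beadCap] at hcap
    split_ifs at hcap with hit
    · have hx := hmem hi hcap
      rw [show i + t * (m - 1) = m * t - 1 by rw [Nat.mul_sub_one, mul_comm]; omega] at hx
      exact Partn.zero_not_mem_betaSet (by simpa using hclosed _ hx le_rfl)
    · have hx := hclosed _ (hmem hi hcap) (by rw [mul_comm]; omega)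
      rw [show i + t * m - (m * t - 1) = i + 1 by rw [mul_comm]; omega] at hx
      exact Partn.add_one_not_mem_betaSet hd (by simpa using hmem (a := 0) hi (by omega)) hx
  · by_contra! hadj
    exact Partn.add_one_not_mem_betaSet hd
      (by simpa using hmem (a := 0) (by omega) (Nat.pos_of_ne_zero hadj.1))
      (by simpa using hmem (a := 0) hi (Nat.pos_of_ne_zero hadj.2))

/-- For a maximal-size `(t, mt−1)`-core partition with distinct parts, `n_(t−1)(λ)` is
`0` or `m−1`, and each `nᵢ(λ)` with `i ≤ t−2` is `0` or `m`. -/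
theorem nFn_of_largest_t_mt_sub_one (t m : ℕ) (ht : 2 ≤ t) (hm : 2 ≤ m) (lam : Partn)
    (hlam : (lam.IsCore t ∧ lam.IsCore (m * t - 1) ∧ lam.DistinctParts))
    (hmax : ∀ mu : Partn, (mu.IsCore t ∧ mu.IsCore (m * t - 1) ∧ mu.DistinctParts) → mu.size ≤ lam.size) :
    (Partn.nFn t (t - 1) lam = 0 ∨ Partn.nFn t (t - 1) lam = m - 1) ∧
      ∀ i : ℕ, 1 ≤ i → i ≤ t - 2 → Partn.nFn t i lam = 0 ∨ Partn.nFn t i lam = m := by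
  have hadm := Partn.isAdmissible_nFn (by omega) (by omega) hlam
  have hsize := lam.two_mul_size (lam.betaSet_eq_abacus (by omega) hlam.1)
  have hfull : ∀ i, 1 ≤ i → i < t → lam.nFn t i = 0 ∨ lam.nFn t i = beadCap t m i := by
    intro i hi hit
    by_contra! hmid
    obtain ⟨ν, hν, hlt⟩ := hadm.exists_twiceSize_gt ht (by omega) hit hmid.1 hmid.2
    obtain ⟨mu, hmu, hmu_size⟩ := hν.exists_partn (by omega)
    have := hmax mu hmu
    omega
  refine ⟨by simpa [beadCap] using hfull (t - 1) (by omega) (by omega), fun i hi hit => ?_⟩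
  simpa [beadCap, show i ≠ t - 1 by omega] using hfull i hi (by omega)
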